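/- Let m ≥ 2 be an integer and define h_m : ℕ → ℕ by h_m(a) = |2a − (m+1)|. Then there exists an integer a with 1 ≤ a ≤ m, h_m(h_m(a)) = a and h_m(a) ≠ a if and only if 5 divides m + 1. Moreover, when 5 divides m + 1, the set of such a is exactly {(m+1)/5, 3(m+1)/5}. Hence the two-digit Kaprekar routine in base m has a nontrivial fixed set of cardinality 2 if and only if 5 ∣ m+1, and such a fixed set is unique. -/

import Mathlib

/-! Write `n = m + 1` and `b = |2a - n|`. If `2a ≥ n` then `|2b - n| = |4a - 3n|`, which equals `a`
exactly when `a = n` or `5a = 3n`; if `2a < n` it is `|n - 4a|`, equal to `a` exactly when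
`3a = n` or `5a = n`. The cases `a = n` and `3a = n` are fixed points, so the points of exact period
two are the solutions of `5a = n` and `5a = 3n`, which exist in `[1, m]` precisely when `5 ∣ n`. -/

def kaprekarMap (n a : ℕ) : ℕ := (2 * (a : ℤ) - n).natAbs

theorem kaprekarMap_kaprekarMap_eq_and_ne_iff {n : ℕ} (hn : 0 < n) (a : ℕ) :
    kaprekarMap n (kaprekarMap n a) = a ∧ kaprekarMap n a ≠ a ↔ 5 * a = n ∨ 5 * a = 3 * n := by
  unfold kaprekarMap
  omega

theorem exists_five_mul_eq_or_iff_five_dvd {n : ℕ} (hn : 0 < n) :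
    (∃ a, 0 < a ∧ a < n ∧ (5 * a = n ∨ 5 * a = 3 * n)) ↔ 5 ∣ n := by
  constructor
  · rintro ⟨a, -, -, ha | ha⟩
    · exact ⟨a, ha.symm⟩
    · exact (Nat.Coprime.dvd_mul_left (by norm_num : Nat.Coprime 5 3)).mp ⟨a, ha.symm⟩
  · rintro ⟨k, rfl⟩
    exact ⟨k, by omega, by omega, Or.inl rfl⟩

theorem five_mul_eq_or_iff_eq_div {n : ℕ} (h5 : 5 ∣ n) (a : ℕ) :
    5 * a = n ∨ 5 * a = 3 * n ↔ a = n / 5 ∨ a = 3 * n / 5 := by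
  omega

theorem twoDigitKaprekar_period_two_general (m : ℕ)
    (h : ℕ → ℕ) (hh : ∀ a : ℕ, h a = (2 * (a : ℤ) - (m + 1)).natAbs) :
    ((∃ a : ℕ, 1 ≤ a ∧ a ≤ m ∧ h (h a) = a ∧ h a ≠ a) ↔ 5 ∣ m + 1) ∧
    (5 ∣ m + 1 → ∀ a : ℕ, 1 ≤ a → a ≤ m →
      ((h (h a) = a ∧ h a ≠ a) ↔ (a = (m + 1) / 5 ∨ a = 3 * (m + 1) / 5))) := by
  obtain rfl : h = kaprekarMap (m + 1) := funext fun a => by simp [hh, kaprekarMap]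
  have hn : 0 < m + 1 := m.succ_pos
  refine ⟨?_, fun h5 a _ _ => ?_⟩
  · rw [← exists_five_mul_eq_or_iff_five_dvd hn]
    simp only [kaprekarMap_kaprekarMap_eq_and_ne_iff hn, Nat.one_le_iff_ne_zero, Nat.pos_iff_ne_zero,
      Nat.lt_succ_iff]
  · rw [kaprekarMap_kaprekarMap_eq_and_ne_iff hn, five_mul_eq_or_iff_eq_div h5]

/-- For `m ≥ 2`, with `h_m(a) = |2a - (m+1)|`: there exists `1 ≤ a ≤ m` with
`h_m(h_m(a)) = a` and `h_m(a) ≠ a` iff `5 ∣ m+1`, and in that case the set of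
such `a` is exactly `{(m+1)/5, 3(m+1)/5}`. -/
theorem twoDigitKaprekar_period_two (m : ℕ) (hm : 2 ≤ m)
    (h : ℕ → ℕ) (hh : ∀ a : ℕ, h a = (2 * (a : ℤ) - (m + 1)).natAbs) :
    ((∃ a : ℕ, 1 ≤ a ∧ a ≤ m ∧ h (h a) = a ∧ h a ≠ a) ↔ 5 ∣ m + 1) ∧
    (5 ∣ m + 1 → ∀ a : ℕ, 1 ≤ a → a ≤ m →
      ((h (h a) = a ∧ h a ≠ a) ↔ (a = (m + 1) / 5 ∨ a = 3 * (m + 1) / 5))) :=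
  twoDigitKaprekar_period_two_general m h hh
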